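/- Let c and c' be sets of ordinals and C a set of ordinals, and suppose that for every ordinal ξ that is a common limit point of c and c' (i.e., ξ = sup(c ∩ ξ) = sup(c' ∩ ξ) > 0), one has c ∩ ξ = c' ∩ ξ. Define d = lim(c) ∩ C and d' = lim(c') ∩ C. Then for every ξ ∈ d ∩ d', d ∩ ξ = d' ∩ ξ. -/

import Mathlib

open Ordinal Set

/-- The set of nonzero limit points of a set of ordinals. -/
def limPts (c : Set Ordinal) : Set Ordinal :=
  {ξ | sSup (c ∩ Set.Iio ξ) = ξ ∧ 0 < ξ}

theorem inter_Iio_eq_of_le {α : Type*} [Preorder α] {s t : Set α} {a b : α}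
    (h : s ∩ Iio b = t ∩ Iio b) (hab : a ≤ b) : s ∩ Iio a = t ∩ Iio a := by
  have hIio : Iio b ∩ Iio a = Iio a := inter_eq_right.mpr (Iio_subset_Iio hab)
  rw [← hIio, ← inter_assoc, h, inter_assoc]

theorem mem_limPts_congr {c c' : Set Ordinal} {η : Ordinal} (h : c ∩ Iio η = c' ∩ Iio η) :
    η ∈ limPts c ↔ η ∈ limPts c' := by
  simp only [limPts, mem_ofPred_eq, h]

theorem limPts_inter_Iio_congr {c c' : Set Ordinal} {ξ : Ordinal}
    (h : c ∩ Iio ξ = c' ∩ Iio ξ) : limPts c ∩ Iio ξ = limPts c' ∩ Iio ξ := by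
  ext η
  simp only [mem_inter_iff, mem_Iio, and_congr_left_iff]
  exact fun hη => mem_limPts_congr (inter_Iio_eq_of_le h hη.le)

/-- If `c` and `c'` agree below every common limit point, then
    `d = lim(c) ∩ C` and `d' = lim(c') ∩ C` agree below every member of `d ∩ d'`. -/
theorem lim_inter_coherent (c c' C : Set Ordinal)
    (h : ∀ ξ : Ordinal, 0 < ξ → sSup (c ∩ Set.Iio ξ) = ξ → sSup (c' ∩ Set.Iio ξ) = ξ →
      c ∩ Set.Iio ξ = c' ∩ Set.Iio ξ) :
    ∀ ξ ∈ (limPts c ∩ C) ∩ (limPts c' ∩ C),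
      (limPts c ∩ C) ∩ Set.Iio ξ = (limPts c' ∩ C) ∩ Set.Iio ξ := by
  rintro ξ ⟨⟨⟨hsup, hpos⟩, -⟩, ⟨hsup', -⟩, -⟩
  rw [inter_right_comm, inter_right_comm (limPts c'),
    limPts_inter_Iio_congr (h ξ hpos hsup hsup')]
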